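/- arXiv:2102.10806 — 7 statements merged into one kernel-verified Lean document; each statement's English description precedes it below -/
import Mathlib

section
/- (Proposition 2: the set of safe abstract states is control positive invariant.) Let k* satisfy U (k*+1) = U k* and define Xsafe = Q \ U k*. Then for every q ∈ Xsafe there exists a controller partition p ∈ P such that Next q p ⊆ Xsafe. -/
/-- Proposition 2: the set of safe abstract states `Xsafe = Q \ U kstar` is
control positive invariant. -/
theorem safe_states_control_invariant
    {Q P : Type*} [Fintype Q] [DecidableEq Q] [Fintype P]
    (Next : Q → P → Finset Q) (Obst : Finset Q)
    (U : ℕ → Finset Q)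
    (hU0 : U 0 = Obst)
    (hUsucc : ∀ k, U (k + 1) =
      U k ∪ Finset.univ.filter (fun q => ∀ p : P, (Next q p ∩ U k).Nonempty))
    (kstar : ℕ) (hfix : U (kstar + 1) = U kstar)
    (Xsafe : Finset Q) (hXsafe : Xsafe = Finset.univ \ U kstar) :
    ∀ q ∈ Xsafe, ∃ p : P, Next q p ⊆ Xsafe := by
  intro q hq
  rw [hXsafe, Finset.mem_sdiff] at hq
  have hq' : q ∉ U (kstar + 1) := hfix ▸ hq.2
  rw [hUsucc, Finset.mem_union, Finset.mem_filter] at hq'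
  push_neg at hq'
  obtain ⟨p, hp⟩ := hq'.2 (Finset.mem_univ q)
  refine ⟨p, fun x hx => ?_⟩
  rw [hXsafe, Finset.mem_sdiff]
  refine ⟨Finset.mem_univ x, fun hxU => ?_⟩
  exact Finset.not_nonempty_iff_eq_empty.mpr hp ⟨x, Finset.mem_inter.mpr ⟨hx, hxU⟩⟩
end

section
/- (Completeness of the backtracking: unsafe states inevitably lead to obstacles.) For every k ∈ ℕ, every q ∈ U k, and every strategy σ : Q → P, there exist T ≤ k and a finite run ρ : Fin (T+1) → Q with ρ 0 = q, ρ (t+1) ∈ Next (ρ t) (σ (ρ t)) for every t < T, and ρ T ∈ Obst. -/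
/-- Completeness of the backtracking: from every state in `U k`, under every
strategy `σ`, some run of length at most `k` reaches an obstacle. -/
theorem unsafe_states_inevitably_reach_obstacles
    {Q P : Type*} [Fintype Q] [DecidableEq Q] [Fintype P]
    (Next : Q → P → Finset Q) (Obst : Finset Q)
    (U : ℕ → Finset Q)
    (hU0 : U 0 = Obst)
    (hUsucc : ∀ k, U (k + 1) =
      U k ∪ Finset.univ.filter (fun q => ∀ p : P, (Next q p ∩ U k).Nonempty)) :
    ∀ k : ℕ, ∀ q ∈ U k, ∀ σ : Q → P,
      ∃ T ≤ k, ∃ ρ : Fin (T + 1) → Q,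
        ρ 0 = q ∧
        (∀ t : Fin T, ρ t.succ ∈ Next (ρ t.castSucc) (σ (ρ t.castSucc))) ∧
        ρ (Fin.last T) ∈ Obst := by
  intro k
  induction k with
  | zero =>
    intro q hq σ
    refine ⟨0, le_refl 0, fun _ => q, rfl, ?_, ?_⟩
    · intro t; exact absurd t.2 (Nat.not_lt_zero _)
    · rw [hU0] at hq; exact hq
  | succ k ih =>
    intro q hq σ
    rw [hUsucc k, Finset.mem_union] at hq
    rcases hq with hq | hq
    · obtain ⟨T, hT, ρ, h0, hstep, hlast⟩ := ih q hq σ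
      exact ⟨T, le_trans hT (Nat.le_succ k), ρ, h0, hstep, hlast⟩
    · rw [Finset.mem_filter] at hq
      obtain ⟨q', hq'⟩ := hq.2 (σ q)
      rw [Finset.mem_inter] at hq'
      obtain ⟨T, hT, ρ, h0, hstep, hlast⟩ := ih q' hq'.2 σ
      refine ⟨T + 1, Nat.succ_le_succ hT, Fin.cases q ρ, Fin.cases_zero, ?_, ?_⟩
      · intro t
        induction t using Fin.cases with
        | zero =>
          simp only [Fin.castSucc_zero, Fin.cases_zero, Fin.cases_succ, h0]
          exact hq'.1
        | succ i =>
          have h1 : (Fin.succ i).succ = (i.succ).succ := rfl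
          have h2 : (Fin.succ i).castSucc = (i.castSucc).succ := rfl
          rw [h1, h2]
          simp only [Fin.cases_succ]
          exact hstep i
      · have e : Fin.last (T + 1) = (Fin.last T).succ := rfl
        rw [e]
        simp only [Fin.cases_succ]
        exact hlast
end

section
/- (Theorem 1: safety of CPWA controllers selected from the safe controller partitions.) Let Xsafe ⊆ I and suppose the controller Ψ : ℝⁿ → ℝᵐ satisfies: for every i ∈ Xsafe and every x ∈ q i there exist j ∈ J and (K, b) ∈ P j such that Next(i,j) ⊆ Xsafe and Ψ x = K.mulVec x + b. Then every closed-loop trajectory ξ : ℕ → ℝⁿ with ξ 0 ∈ ⋃_{i ∈ Xsafe} q i and ξ (t+1) = f (ξ t, Ψ (ξ t)) satisfies ξ t ∈ ⋃_{i ∈ Xsafe} q i for all t ∈ ℕ; consequently, if every obstacle O ⊆ ℝⁿ in a given finite family is disjoint from ⋃_{i ∈ Xsafe} q i, then ξ t avoids all obstacles for all t. -/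
open Matrix

/-- Theorem 1: safety of CPWA controllers selected from the safe controller
partitions.  Any trajectory starting in the union of the safe abstract states
stays there forever, and hence avoids every obstacle disjoint from that
union. -/
theorem cpwa_controller_safety
    {n m : ℕ} {I J : Type*} [Fintype I] [Fintype J]
    (f : (Fin n → ℝ) → (Fin m → ℝ) → (Fin n → ℝ))
    (q : I → Set (Fin n → ℝ))
    (P : J → Set (Matrix (Fin m) (Fin n) ℝ × (Fin m → ℝ)))
    (Post : I → J → Set (Fin n → ℝ))
    (hPost : ∀ i j, ∀ x ∈ q i, ∀ Kb ∈ P j,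
      f x (Kb.1.mulVec x + Kb.2) ∈ Post i j)
    (hPostCover : ∀ i j, Post i j ⊆ ⋃ i' : I, q i')
    (Next : I → J → Set I)
    (hNext : ∀ i j, Next i j = {i' : I | (q i' ∩ Post i j).Nonempty})
    (Xsafe : Set I)
    (Ψ : (Fin n → ℝ) → (Fin m → ℝ))
    (hΨ : ∀ i ∈ Xsafe, ∀ x ∈ q i, ∃ j : J, ∃ Kb ∈ P j,
      Next i j ⊆ Xsafe ∧ Ψ x = Kb.1.mulVec x + Kb.2) :
    ∀ ξ : ℕ → (Fin n → ℝ),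
      ξ 0 ∈ ⋃ i ∈ Xsafe, q i →
      (∀ t, ξ (t + 1) = f (ξ t) (Ψ (ξ t))) →
      (∀ t, ξ t ∈ ⋃ i ∈ Xsafe, q i) ∧
      (∀ Obs : Finset (Set (Fin n → ℝ)),
        (∀ O ∈ Obs, Disjoint O (⋃ i ∈ Xsafe, q i)) →
        ∀ t, ∀ O ∈ Obs, ξ t ∉ O) := by
  intro ξ h0 hstep
  have hsafe : ∀ t, ξ t ∈ ⋃ i ∈ Xsafe, q i := by
    intro t
    induction t with
    | zero => exact h0
    | succ t ih =>
      rcases Set.mem_iUnion₂.mp ih with ⟨i, hi, hx⟩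
      rcases hΨ i hi (ξ t) hx with ⟨j, Kb, hKb, hNextSafe, hΨeq⟩
      have hpost : ξ (t + 1) ∈ Post i j := by
        rw [hstep t, hΨeq]; exact hPost i j _ hx Kb hKb
      rcases Set.mem_iUnion.mp (hPostCover i j hpost) with ⟨i', hi'⟩
      have : i' ∈ Next i j := by
        rw [hNext]; exact ⟨ξ (t + 1), hi', hpost⟩
      exact Set.mem_iUnion₂.mpr ⟨i', hNextSafe this, hi'⟩
  refine ⟨hsafe, fun Obs hObs t O hO hmem => ?_⟩
  exact (hObs O hO).le_bot ⟨hmem, hsafe t⟩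
end

section
/- (Proposition 3: bound on the output change of a neural network under a change of its output-layer weights.) Let h : ℝⁿ → ℝᵖ satisfy h j x ≥ 0 for all x and j. Let L be a finite index set and for each l ∈ L let V l be a nonempty finite subset of ℝⁿ such that q ⊆ ⋃_{l ∈ L} convexHull ℝ (V l), and suppose that for each l there is an affine map A l : (Fin n → ℝ) →ᵃ[ℝ] (Fin p → ℝ) with h x = A l x for all x ∈ convexHull ℝ (V l). Let W, Ŵ ∈ Matrix (Fin m) (Fin p) ℝ and b, b̂ ∈ ℝᵐ, and set ΔW = Ŵ − W, Δb = b̂ − b. Then for every x ∈ q, Σ_{i} |((Ŵ.mulVec (h x) + b̂) − (W.mulVec (h x) + b)) i| ≤ max over the finite set ⋃_{l ∈ L} V l of the function x' ↦ Σ_{i} Σ_{j} |ΔW i j| * h j x' + Σ_{i} |Δb i|. -/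
open Matrix

/-- Proposition 3: bound on the output change of a neural network under a
change of its output-layer weights.  The ℓ¹ change of the output over the
abstract state `q` is bounded by the maximum, over the vertices of the linear
regions covering `q`, of `Σᵢⱼ |ΔWᵢⱼ| hⱼ(x') + Σᵢ |Δbᵢ|`. -/
theorem nn_output_change_bound
    {n p m : ℕ} {L : Type*} [Fintype L] [Nonempty L]
    (q : Set (Fin n → ℝ))
    (h : (Fin n → ℝ) → (Fin p → ℝ))
    (hpos : ∀ x j, 0 ≤ h x j)
    (V : L → Finset (Fin n → ℝ)) (hVne : ∀ l, (V l).Nonempty)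
    (hcover : q ⊆ ⋃ l : L, convexHull ℝ ((V l : Set (Fin n → ℝ))))
    (A : L → ((Fin n → ℝ) →ᵃ[ℝ] (Fin p → ℝ)))
    (haff : ∀ l, ∀ x ∈ convexHull ℝ ((V l : Set (Fin n → ℝ))), h x = A l x)
    (W What : Matrix (Fin m) (Fin p) ℝ) (b bhat : Fin m → ℝ) :
    ∀ x ∈ q,
      ∑ i, |((What.mulVec (h x) + bhat) - (W.mulVec (h x) + b)) i| ≤
        (Finset.univ.biUnion V).sup'
          (by
            obtain ⟨l⟩ := ‹Nonempty L›
            obtain ⟨v, hv⟩ := hVne l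
            exact ⟨v, Finset.mem_biUnion.mpr ⟨l, Finset.mem_univ l, hv⟩⟩)
          (fun x' => (∑ i, ∑ j, |(What - W) i j| * h x' j) + ∑ i, |(bhat - b) i|) := by

  intro x hx
  obtain ⟨l, hl⟩ : ∃ l, x ∈ convexHull ℝ ((V l : Set (Fin n → ℝ))) := by
    simpa using hcover hx
  -- the linear functional v ↦ Σᵢⱼ |ΔWᵢⱼ| vⱼ
  set ℓ : (Fin p → ℝ) →ₗ[ℝ] ℝ :=
    { toFun := fun v => ∑ i : Fin m, ∑ j, |(What - W) i j| * v j
      map_add' := by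
        intro u v
        simp [mul_add, Finset.sum_add_distrib]
      map_smul' := by
        intro c v
        simp [Finset.mul_sum, mul_left_comm] } with hℓ
  have hconv : ConvexOn ℝ Set.univ (fun x' => ℓ ((A l) x')) := by
    have := (ℓ.convexOn convex_univ).comp_affineMap (A l)
    exact this
  obtain ⟨v, hv, hle⟩ := hconv.exists_ge_of_mem_convexHull
    (Set.subset_univ _) hl
  have hvhull : (v : Fin n → ℝ) ∈ convexHull ℝ ((V l : Set (Fin n → ℝ))) :=
    subset_convexHull ℝ _ hv
  have hvmem : v ∈ Finset.univ.biUnion V :=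
    Finset.mem_biUnion.mpr ⟨l, Finset.mem_univ l, hv⟩
  have key : (∑ i, ∑ j, |(What - W) i j| * h x j) + ∑ i, |(bhat - b) i| ≤
      (∑ i, ∑ j, |(What - W) i j| * h v j) + ∑ i, |(bhat - b) i| := by
    have h1 : (∑ i : Fin m, ∑ j, |(What - W) i j| * h x j) = ℓ ((A l) x) := by
      rw [← haff l x hl]; rfl
    have h2 : (∑ i : Fin m, ∑ j, |(What - W) i j| * h v j) = ℓ ((A l) v) := by
      rw [← haff l v hvhull]; rfl
    rw [h1, h2]
    exact add_le_add_left hle _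
  refine le_trans ?_ (le_trans key (Finset.le_sup' (fun x' => (∑ i, ∑ j, |(What - W) i j| * h x' j) + ∑ i, |(bhat - b) i|) hvmem))
  -- triangle inequality step
  have step : ∀ i, |((What.mulVec (h x) + bhat) - (W.mulVec (h x) + b)) i| ≤
      (∑ j, |(What - W) i j| * h x j) + |(bhat - b) i| := by
    intro i
    have : ((What.mulVec (h x) + bhat) - (W.mulVec (h x) + b)) i
        = (∑ j, (What - W) i j * h x j) + (bhat - b) i := by
      simp [Matrix.mulVec, dotProduct, Matrix.sub_apply, sub_mul,
        Finset.sum_sub_distrib]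
      ring
    rw [this]
    refine le_trans (abs_add_le _ _) (add_le_add_left ?_ _)
    refine le_trans (Finset.abs_sum_le_sum_abs _ _) (le_of_eq ?_)
    refine Finset.sum_congr rfl fun j _ => ?_
    rw [abs_mul, abs_of_nonneg (hpos x j)]
  calc ∑ i, |((What.mulVec (h x) + bhat) - (W.mulVec (h x) + b)) i|
      ≤ ∑ i, ((∑ j, |(What - W) i j| * h x j) + |(bhat - b) i|) :=
        Finset.sum_le_sum fun i _ => step i
    _ = (∑ i, ∑ j, |(What - W) i j| * h x j) + ∑ i, |(bhat - b) i| := by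
        rw [Finset.sum_add_distrib]
end

section
/- (Theorem 2: a projected local network is safe at its abstract state.) Fix i ∈ I and a set Xsafe ⊆ I, and suppose j ∈ J satisfies Next(i,j) ⊆ Xsafe. Let NN : ℝⁿ → ℝᵐ be a controller such that for every x ∈ q i there exists (K, b) ∈ P j with NN x = K.mulVec x + b. Then for every x ∈ q i, f (x, NN x) ∈ ⋃_{i' ∈ Xsafe} q i'. -/
open Matrix

/-- Theorem 2: a projected local network is safe at its abstract state.  If on
`q i` the controller `NN` realizes affine controllers with parameters in the
partition `P j`, and `Next (i, j) ⊆ Xsafe`, then every one-step successor from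
`q i` under `NN` lies in the union of the safe abstract states. -/
theorem projected_local_network_safe
    {n m : ℕ} {I J : Type*} [Fintype I] [Fintype J]
    (f : (Fin n → ℝ) → (Fin m → ℝ) → (Fin n → ℝ))
    (q : I → Set (Fin n → ℝ))
    (P : J → Set (Matrix (Fin m) (Fin n) ℝ × (Fin m → ℝ)))
    (Post : I → J → Set (Fin n → ℝ))
    (hPost : ∀ i j, ∀ x ∈ q i, ∀ Kb ∈ P j,
      f x (Kb.1.mulVec x + Kb.2) ∈ Post i j)
    (hPostCover : ∀ i j, Post i j ⊆ ⋃ i' : I, q i')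
    (Next : I → J → Set I)
    (hNext : ∀ i j, Next i j = {i' : I | (q i' ∩ Post i j).Nonempty})
    (i : I) (Xsafe : Set I) (j : J)
    (hsafe : Next i j ⊆ Xsafe)
    (NN : (Fin n → ℝ) → (Fin m → ℝ))
    (hNN : ∀ x ∈ q i, ∃ Kb ∈ P j, NN x = Kb.1.mulVec x + Kb.2) :
    ∀ x ∈ q i, f x (NN x) ∈ ⋃ i' ∈ Xsafe, q i' := by
  intro x hx
  obtain ⟨Kb, hKb, hNNx⟩ := hNN x hx
  have hpost : f x (NN x) ∈ Post i j := by
    rw [hNNx]; exact hPost i j x hx Kb hKb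
  obtain ⟨_, ⟨i', rfl⟩, hi'⟩ := hPostCover i j hpost
  have hmem : i' ∈ Next i j := by
    rw [hNext]; exact ⟨f x (NN x), hi', hpost⟩
  exact Set.mem_biUnion (hsafe hmem) hi'
end

section
/- (Theorem 3, safety part: the combined global neural network controller is safe.) Let Xsafe ⊆ I, assume the sets q i for i ∈ Xsafe are pairwise disjoint, and for each i ∈ Xsafe let g i : ℝⁿ → ℝᵐ be a local controller such that for every x ∈ q i there exist j ∈ J and (K, b) ∈ P j with Next(i,j) ⊆ Xsafe and g i x = K.mulVec x + b. Let G : ℝⁿ → ℝᵐ be any global controller with G x = g i x whenever i ∈ Xsafe and x ∈ q i. Then every trajectory ξ : ℕ → ℝⁿ with ξ 0 ∈ ⋃_{i ∈ Xsafe} q i and ξ (t+1) = f (ξ t, G (ξ t)) satisfies ξ t ∈ ⋃_{i ∈ Xsafe} q i for all t ∈ ℕ. -/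
open Matrix

/-- Theorem 3, safety part: the combined global neural network controller,
which agrees with provably safe local controllers on the (pairwise disjoint)
safe abstract states, keeps every trajectory started in the union of the safe
abstract states inside that union forever. -/
theorem global_nn_controller_safe
    {n m : ℕ} {I J : Type*} [Fintype I] [Fintype J]
    (f : (Fin n → ℝ) → (Fin m → ℝ) → (Fin n → ℝ))
    (q : I → Set (Fin n → ℝ))
    (P : J → Set (Matrix (Fin m) (Fin n) ℝ × (Fin m → ℝ)))
    (Post : I → J → Set (Fin n → ℝ))
    (hPost : ∀ i j, ∀ x ∈ q i, ∀ Kb ∈ P j,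
      f x (Kb.1.mulVec x + Kb.2) ∈ Post i j)
    (hPostCover : ∀ i j, Post i j ⊆ ⋃ i' : I, q i')
    (Next : I → J → Set I)
    (hNext : ∀ i j, Next i j = {i' : I | (q i' ∩ Post i j).Nonempty})
    (Xsafe : Set I)
    (hdisj : ∀ i ∈ Xsafe, ∀ i' ∈ Xsafe, i ≠ i' → Disjoint (q i) (q i'))
    (g : I → (Fin n → ℝ) → (Fin m → ℝ))
    (hg : ∀ i ∈ Xsafe, ∀ x ∈ q i, ∃ j : J, ∃ Kb ∈ P j,
      Next i j ⊆ Xsafe ∧ g i x = Kb.1.mulVec x + Kb.2)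
    (G : (Fin n → ℝ) → (Fin m → ℝ))
    (hG : ∀ i ∈ Xsafe, ∀ x ∈ q i, G x = g i x) :
    ∀ ξ : ℕ → (Fin n → ℝ),
      ξ 0 ∈ ⋃ i ∈ Xsafe, q i →
      (∀ t, ξ (t + 1) = f (ξ t) (G (ξ t))) →
      ∀ t, ξ t ∈ ⋃ i ∈ Xsafe, q i := by
  intro ξ h0 hstep t
  induction t with
  | zero => exact h0
  | succ t ih =>
    simp only [Set.mem_iUnion] at ih
    obtain ⟨i, hi, hx⟩ := ih
    obtain ⟨j, Kb, hKb, hNs, hgx⟩ := hg i hi (ξ t) hx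
    have hpost : ξ (t + 1) ∈ Post i j := by
      rw [hstep t, hG i hi (ξ t) hx, hgx]
      exact hPost i j (ξ t) hx Kb hKb
    obtain ⟨i', hi'⟩ := Set.mem_iUnion.mp (hPostCover i j hpost)
    have : i' ∈ Next i j := by
      rw [hNext]; exact ⟨ξ (t + 1), hi', hpost⟩
    exact Set.mem_iUnion.mpr ⟨i', Set.mem_iUnion.mpr ⟨hNs this, hi'⟩⟩
end

section
/- (Theorem 3, liveness part: local reachability requirements imply reaching the goal.) Let Xsafe ⊆ I, Xgoal ⊆ ℝⁿ, and d : I → ℕ a ranking. Suppose the controller G : ℝⁿ → ℝᵐ satisfies: for every i ∈ Xsafe and every x ∈ q i, f (x, G x) ∈ Xgoal ∪ ⋃_{i' ∈ Xsafe, d i' < d i} q i'. Then for every i ∈ Xsafe, every trajectory ξ : ℕ → ℝⁿ with ξ 0 ∈ q i and ξ (t+1) = f (ξ t, G (ξ t)) satisfies: there exists t with 1 ≤ t ≤ d i + 1 and ξ t ∈ Xgoal. -/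
/-- Theorem 3, liveness part: if from every safe abstract state the controller
drives the system either into the goal or into a safe abstract state of
strictly smaller rank, then every trajectory started in a safe abstract state
`q i` reaches the goal within `d i + 1` steps. -/
theorem local_reachability_implies_liveness
    {n m : ℕ} {I : Type*} [Fintype I]
    (f : (Fin n → ℝ) → (Fin m → ℝ) → (Fin n → ℝ))
    (q : I → Set (Fin n → ℝ))
    (Xsafe : Set I) (Xgoal : Set (Fin n → ℝ)) (d : I → ℕ)
    (G : (Fin n → ℝ) → (Fin m → ℝ))
    (hG : ∀ i ∈ Xsafe, ∀ x ∈ q i,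
      f x (G x) ∈ Xgoal ∪ ⋃ i' ∈ {i' ∈ Xsafe | d i' < d i}, q i') :
    ∀ i ∈ Xsafe, ∀ ξ : ℕ → (Fin n → ℝ),
      ξ 0 ∈ q i →
      (∀ t, ξ (t + 1) = f (ξ t) (G (ξ t))) →
      ∃ t, 1 ≤ t ∧ t ≤ d i + 1 ∧ ξ t ∈ Xgoal := by
  have key : ∀ k : ℕ, ∀ i ∈ Xsafe, d i ≤ k → ∀ ξ : ℕ → (Fin n → ℝ),
      ξ 0 ∈ q i → (∀ t, ξ (t + 1) = f (ξ t) (G (ξ t))) →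
      ∃ t, 1 ≤ t ∧ t ≤ d i + 1 ∧ ξ t ∈ Xgoal := by
    intro k
    induction k with
    | zero =>
      intro i hi hdi ξ h0 hstep
      rcases hG i hi (ξ 0) h0 with hgoal | hrest
      · exact ⟨1, le_refl 1, by omega, by rw [hstep 0]; exact hgoal⟩
      · simp only [Set.mem_iUnion] at hrest
        obtain ⟨i', ⟨hi', hlt⟩, _⟩ := hrest
        omega
    | succ k ih =>
      intro i hi hdi ξ h0 hstep
      rcases hG i hi (ξ 0) h0 with hgoal | hrest
      · exact ⟨1, le_refl 1, by omega, by rw [hstep 0]; exact hgoal⟩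
      · simp only [Set.mem_iUnion] at hrest
        obtain ⟨i', ⟨hi', hlt⟩, hmem⟩ := hrest
        rw [← hstep 0] at hmem
        obtain ⟨t, ht1, ht2, htg⟩ := ih i' hi' (by omega) (fun t => ξ (t + 1))
          (by simpa using hmem) (fun t => hstep (t + 1))
        exact ⟨t + 1, by omega, by omega, htg⟩
  intro i hi
  exact key (d i) i hi le_rfl
end
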